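/- arXiv:2207.01278 — 2 statements merged into one kernel-verified Lean document; each statement's English description precedes it below -/
import Mathlib

section
/- Let q be a complex number with |q| = 1, and let V₁, V₂ be isometries on a complex Hilbert space H such that V = V₁V₂ is a shift. Let 𝔯_q be the unitary defined by 𝔯_q h = Σ_{n≥0} qⁿ Vⁿ(I − VV*)V^{*n}h. Then: (1) (V₁,V₂) is commutative (V₁V₂ = V₂V₁) if and only if (V₁𝔯_q, 𝔯_{q̄}V₂) is q-commutative; (2) (V₁,V₂) is q-commutative if and only if (V₁𝔯_{q̄}, 𝔯_q V₂) is commutative. -/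
/-!
Put `V = V₁V₂` and `Pₙ = Vⁿ(1 - VV*)V*ⁿ`. Since `V*V = 1`, the `Pₙ` are mutually orthogonal
idempotents with `P₀V = 0` and `Pₙ₊₁V = VPₙ`, and their partial sums telescope to `1 - VᴺV*ᴺ`,
which tends strongly to `1` because `V` is a shift. So `𝔯_q` acts as `qⁿ` on the range of `Pₙ`;
this gives `𝔯_{q̄}𝔯_q = 𝔯_q𝔯_{q̄} = 1` and `𝔯_q V = q V 𝔯_q`. Both equivalences are then algebra:
conjugation by the unit `𝔯_q` rescales `V₁V₂` by `q`, which trades commutativity of `(V₁, V₂)`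
for `q`-commutativity of the twisted pair and vice versa.
-/

open ContinuousLinearMap Filter

section LeftInverse

variable {R : Type*} [Ring R] {a b : R}

def wanderingProj (a b : R) (n : ℕ) : R :=
  a ^ n * (1 - a * b) * b ^ n

theorem pow_mul_pow_add_of_mul_eq_one (hba : b * a = 1) (m k : ℕ) :
    b ^ m * a ^ (m + k) = a ^ k := by
  rw [pow_add, ← mul_assoc, pow_mul_pow_eq_one m hba, one_mul]

theorem pow_add_mul_pow_of_mul_eq_one (hba : b * a = 1) (m k : ℕ) :
    b ^ (k + m) * a ^ m = b ^ k := by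
  rw [pow_add, mul_assoc, pow_mul_pow_eq_one m hba, mul_one]

theorem one_sub_mul_mul_self_of_mul_eq_one (hba : b * a = 1) : (1 - a * b) * a = 0 := by
  rw [sub_mul, one_mul, mul_assoc, hba, mul_one, sub_self]

theorem mul_one_sub_mul_of_mul_eq_one (hba : b * a = 1) : b * (1 - a * b) = 0 := by
  rw [mul_sub, mul_one, ← mul_assoc, hba, one_mul, sub_self]

theorem wanderingProj_eq_sub (n : ℕ) :
    wanderingProj a b n = a ^ n * b ^ n - a ^ (n + 1) * b ^ (n + 1) := by
  rw [wanderingProj, mul_sub, mul_one, sub_mul, pow_succ, pow_succ', mul_assoc, mul_assoc,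
    mul_assoc]

theorem sum_range_wanderingProj (N : ℕ) :
    ∑ i ∈ Finset.range N, wanderingProj a b i = 1 - a ^ N * b ^ N := by
  simp only [wanderingProj_eq_sub]
  rw [Finset.sum_range_sub' (fun i => a ^ i * b ^ i), pow_zero, pow_zero, one_mul]

theorem wanderingProj_mul_wanderingProj (m n : ℕ) :
    wanderingProj a b m * wanderingProj a b n =
      a ^ m * ((1 - a * b) * (b ^ m * a ^ n) * (1 - a * b)) * b ^ n := by
  simp only [wanderingProj, mul_assoc]

theorem wanderingProj_mul_self (hba : b * a = 1) (n : ℕ) :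
    wanderingProj a b n * wanderingProj a b n = wanderingProj a b n := by
  rw [wanderingProj_mul_wanderingProj, pow_mul_pow_eq_one n hba, mul_one, sub_mul _ _ (1 - _),
    one_mul, mul_assoc a, mul_one_sub_mul_of_mul_eq_one hba, mul_zero, sub_zero, wanderingProj]

theorem wanderingProj_mul_of_ne (hba : b * a = 1) {m n : ℕ} (hmn : m ≠ n) :
    wanderingProj a b m * wanderingProj a b n = 0 := by
  rw [wanderingProj_mul_wanderingProj]
  rcases Nat.lt_or_gt_of_ne hmn with hlt | hgt
  · obtain ⟨k, rfl⟩ : ∃ k, n = m + (k + 1) := ⟨n - m - 1, by omega⟩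
    rw [pow_mul_pow_add_of_mul_eq_one hba, pow_succ', ← mul_assoc _ a,
      one_sub_mul_mul_self_of_mul_eq_one hba]
    simp
  · obtain ⟨k, rfl⟩ : ∃ k, m = (k + 1) + n := ⟨m - n - 1, by omega⟩
    rw [pow_add_mul_pow_of_mul_eq_one hba, pow_succ, mul_assoc _ (_ * b), mul_assoc (b ^ k),
      mul_one_sub_mul_of_mul_eq_one hba]
    simp

theorem wanderingProj_zero_mul (hba : b * a = 1) : wanderingProj a b 0 * a = 0 := by
  rw [wanderingProj, pow_zero, pow_zero, one_mul, mul_one, one_sub_mul_mul_self_of_mul_eq_one hba]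

theorem wanderingProj_succ_mul (hba : b * a = 1) (n : ℕ) :
    wanderingProj a b (n + 1) * a = a * wanderingProj a b n := by
  rw [wanderingProj, wanderingProj, pow_succ' a, pow_succ b, mul_assoc _ _ a, mul_assoc _ b, hba,
    mul_one]
  simp only [mul_assoc]

end LeftInverse

section Shift

variable {H : Type*} [NormedAddCommGroup H] [InnerProductSpace ℂ H] [CompleteSpace H]
  {V : H →L[ℂ] H}

theorem norm_pow_apply (hV : adjoint V * V = 1) (n : ℕ) (x : H) : ‖(V ^ n) x‖ = ‖x‖ := by
  refine (norm_map_iff_adjoint_comp_self (V ^ n)).mpr ?_ x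
  rw [← star_eq_adjoint, star_pow, star_eq_adjoint]
  exact pow_mul_pow_eq_one n hV

theorem tendsto_sum_range_wanderingProj (hV : adjoint V * V = 1)
    (hshift : ∀ h : H, Tendsto (fun n : ℕ => (adjoint V ^ n) h) atTop (nhds 0)) (h : H) :
    Tendsto (fun N => ∑ i ∈ Finset.range N, wanderingProj V (adjoint V) i h) atTop (nhds h) := by
  have hrem : Tendsto (fun N => (V ^ N) ((adjoint V ^ N) h)) atTop (nhds 0) := by
    rw [tendsto_zero_iff_norm_tendsto_zero]
    simpa only [norm_pow_apply hV] using (tendsto_zero_iff_norm_tendsto_zero.mp (hshift h))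
  simpa [← sum_apply, sum_range_wanderingProj] using tendsto_const_nhds.sub hrem

variable {q p : ℂ} {R R' : H →L[ℂ] H}

theorem mul_wanderingProj_of_hasSum (hV : adjoint V * V = 1)
    (hR : ∀ h : H, HasSum (fun n : ℕ => q ^ n • wanderingProj V (adjoint V) n h) (R h))
    (n : ℕ) : R * wanderingProj V (adjoint V) n = q ^ n • wanderingProj V (adjoint V) n := by
  ext x
  set P := wanderingProj V (adjoint V)
  have hsingle : HasSum (fun m => q ^ m • P m (P n x)) (q ^ n • P n (P n x)) :=
    hasSum_single n fun m hm => by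
      rw [← mul_apply_eq_comp, wanderingProj_mul_of_ne hV hm, zero_apply, smul_zero]
  rw [← mul_apply_eq_comp, wanderingProj_mul_self hV] at hsingle
  exact (hR _).unique hsingle

theorem mul_eq_smul_mul_of_hasSum (hV : adjoint V * V = 1)
    (hR : ∀ h : H, HasSum (fun n : ℕ => q ^ n • wanderingProj V (adjoint V) n h) (R h)) :
    R * V = q • (V * R) := by
  ext h
  set P := wanderingProj V (adjoint V)
  have hshifted : HasSum (fun n => q ^ (n + 1) • P (n + 1) (V h)) (q • V (R h)) := by
    convert ((hR h).mapL V).const_smul q using 1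
    funext n
    rw [← mul_apply_eq_comp, wanderingProj_succ_mul hV, mul_apply_eq_comp, map_smul,
      smul_smul, pow_succ']
  have hsum := (hasSum_nat_add_iff (f := fun n => q ^ n • P n (V h)) 1).mp hshifted
  rw [Finset.sum_range_one, pow_zero, one_smul, ← mul_apply_eq_comp (P 0),
    wanderingProj_zero_mul hV, zero_apply, add_zero] at hsum
  exact (hR (V h)).unique hsum

theorem mul_eq_one_of_hasSum (hV : adjoint V * V = 1)
    (hshift : ∀ h : H, Tendsto (fun n : ℕ => (adjoint V ^ n) h) atTop (nhds 0))
    (hR : ∀ h : H, HasSum (fun n : ℕ => q ^ n • wanderingProj V (adjoint V) n h) (R h))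
    (hR' : ∀ h : H, HasSum (fun n : ℕ => p ^ n • wanderingProj V (adjoint V) n h) (R' h))
    (hpq : p * q = 1) : R' * R = 1 := by
  ext h
  have hsum : HasSum (fun n => wanderingProj V (adjoint V) n h) (R' (R h)) := by
    convert (hR h).mapL R' using 2 with n
    rw [map_smul, ← mul_apply_eq_comp, mul_wanderingProj_of_hasSum hV hR', smul_apply,
      smul_smul, ← mul_pow, mul_comm, hpq, one_pow, one_smul]
  exact tendsto_nhds_unique hsum.tendsto_sum_nat (tendsto_sum_range_wanderingProj hV hshift h)

end Shift

section Conjugation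

variable {𝕜 A : Type*} [Field 𝕜] [Ring A] [Algebra 𝕜 A] {q : 𝕜} {V₁ V₂ : A}

theorem smul_units_conj_inj (u : Aˣ) (hq : q ≠ 0) {x y : A} :
    q • (↑u⁻¹ * x * u) = q • (↑u⁻¹ * y * u) ↔ x = y := by
  rw [hq.isUnit.smul_left_cancel, Units.mul_left_inj, Units.mul_right_inj]

theorem eq_smul_units_conj_of_mul_eq_smul_mul {V : A} (u : Aˣ)
    (hu : u * V = q • (V * u)) : V = q • (↑u⁻¹ * V * u) := by
  rw [mul_assoc, ← mul_smul_comm, ← hu, Units.inv_mul_cancel_left]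

theorem mul_comm_iff_of_mul_eq_smul_mul (u : Aˣ) (hu : u * (V₁ * V₂) = q • (V₁ * V₂ * u))
    (hq : q ≠ 0) :
    V₁ * V₂ = V₂ * V₁ ↔ V₁ * u * (↑u⁻¹ * V₂) = q • (↑u⁻¹ * V₂ * (V₁ * u)) := by
  conv_rhs => rw [mul_assoc V₁, Units.mul_inv_cancel_left, ← mul_assoc, mul_assoc _ V₂,
    eq_smul_units_conj_of_mul_eq_smul_mul u hu, smul_units_conj_inj u hq]

theorem mul_eq_smul_mul_comm_iff_of_mul_eq_smul_mul (u : Aˣ)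
    (hu : u * (V₁ * V₂) = q • (V₁ * V₂ * u)) (hq : q ≠ 0) :
    V₁ * V₂ = q • (V₂ * V₁) ↔ V₁ * ↑u⁻¹ * (u * V₂) = u * V₂ * (V₁ * ↑u⁻¹) := by
  conv_rhs => rw [mul_assoc V₁, Units.inv_mul_cancel_left, ← mul_assoc, mul_assoc _ V₂,
    Units.eq_mul_inv_iff_mul_eq, ← Units.inv_mul_eq_iff_eq_mul, ← mul_assoc,
    ← hq.isUnit.smul_left_cancel, ← eq_smul_units_conj_of_mul_eq_smul_mul u hu]

end Conjugation

theorem stmt_9 {H : Type*} [NormedAddCommGroup H] [InnerProductSpace ℂ H] [CompleteSpace H]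
    (q : ℂ) (hq : ‖q‖ = 1) (V₁ V₂ : H →L[ℂ] H)
    (hV₁ : adjoint V₁ ∘L V₁ = 1) (hV₂ : adjoint V₂ ∘L V₂ = 1)
    (hshift : ∀ h : H,
      Tendsto (fun n : ℕ => ((adjoint (V₁ ∘L V₂)) ^ n) h) atTop (nhds 0))
    (𝔯q 𝔯q' : H →L[ℂ] H)
    (h𝔯q : ∀ h : H, HasSum
      (fun n : ℕ => q ^ n • (((V₁ ∘L V₂) ^ n)
        ((1 - (V₁ ∘L V₂) ∘L adjoint (V₁ ∘L V₂)) (((adjoint (V₁ ∘L V₂)) ^ n) h))))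
      (𝔯q h))
    (h𝔯q' : ∀ h : H, HasSum
      (fun n : ℕ => (starRingEnd ℂ q) ^ n • (((V₁ ∘L V₂) ^ n)
        ((1 - (V₁ ∘L V₂) ∘L adjoint (V₁ ∘L V₂)) (((adjoint (V₁ ∘L V₂)) ^ n) h))))
      (𝔯q' h)) :
    (V₁ ∘L V₂ = V₂ ∘L V₁ ↔
      (V₁ ∘L 𝔯q) ∘L (𝔯q' ∘L V₂) = q • ((𝔯q' ∘L V₂) ∘L (V₁ ∘L 𝔯q))) ∧
    (V₁ ∘L V₂ = q • (V₂ ∘L V₁) ↔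
      (V₁ ∘L 𝔯q') ∘L (𝔯q ∘L V₂) = (𝔯q ∘L V₂) ∘L (V₁ ∘L 𝔯q')) := by
  have hV : adjoint (V₁ * V₂) * (V₁ * V₂) = 1 := by
    rw [← star_eq_adjoint, star_mul, star_eq_adjoint, star_eq_adjoint, mul_assoc,
      ← mul_assoc (adjoint V₁), show adjoint V₁ * V₁ = 1 from hV₁, one_mul]
    exact hV₂
  have hconj : q * starRingEnd ℂ q = 1 := by
    rw [Complex.mul_conj, Complex.normSq_eq_norm_sq, hq, one_pow, Complex.ofReal_one]
  -- `h𝔯q`, `h𝔯q'` are the series of `wanderingProj (V₁ * V₂) (adjoint (V₁ * V₂))`, unfolded.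
  let u : (H →L[ℂ] H)ˣ :=
    ⟨𝔯q, 𝔯q', mul_eq_one_of_hasSum hV hshift h𝔯q' h𝔯q hconj,
      mul_eq_one_of_hasSum hV hshift h𝔯q h𝔯q' (by rwa [mul_comm])⟩
  have hu : (u : H →L[ℂ] H) * (V₁ * V₂) = q • (V₁ * V₂ * u) := mul_eq_smul_mul_of_hasSum hV h𝔯q
  have hq0 : q ≠ 0 := by
    rintro rfl
    simp at hq
  exact ⟨mul_comm_iff_of_mul_eq_smul_mul u hu hq0,
    mul_eq_smul_mul_comm_iff_of_mul_eq_smul_mul u hu hq0⟩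
end

section
/- Let q be unimodular, let F and K_u be complex Hilbert spaces, P an orthogonal projection and U a unitary on F, and (W₁,W₂) a pair of unitaries on K_u with W₁W₂ = qW₂W₁. Then the BCL-1 q-model pair ( (R_q⊗P^⊥U + M_zR_q⊗PU) ⊕ W₁ , (R_{q̄}⊗U*P + R_{q̄}M_z⊗U*P^⊥) ⊕ W₂ ) on (H²⊗F) ⊕ K_u is doubly q-commutative if and only if PUP^⊥ = 0. -/
open ContinuousLinearMap

/-- The model space `(H² ⊗ F) ⊕ K_u`, with `H² ⊗ F` identified with `ℓ²(ℕ, F)`. -/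
noncomputable abbrev BCLModelSpace (F Ku : Type*) [NormedAddCommGroup F]
    [InnerProductSpace ℂ F] [NormedAddCommGroup Ku] [InnerProductSpace ℂ Ku] :=
  WithLp 2 ((lp (fun _ : ℕ => F) 2) × Ku)

/-!
Both products of the pair are shifts: `V₁V₂ = M_z ⊕ W₁W₂` and `V₂V₁ = q̄ M_z ⊕ W₂W₁`, so
`V₁V₂ = q V₂V₁` holds for every choice of `P` and `U`. Computing `V₁*` coordinatewise,
`V₂V₁* - q V₁*V₂` vanishes on `K_u` (as `W₁` is unitary) and on every Taylor coefficient but the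
zeroth, where it acts as `-q U*P^⊥U*P`. Hence double q-commutativity amounts to `P^⊥U*P = 0`,
the adjoint of `PUP^⊥ = 0`.
-/

open scoped ComplexInnerProductSpace ComplexConjugate

theorem mul_inverse_eq_smul_inverse_mul {R A : Type*} [CommSemiring R] [Semiring A] [Algebra R A]
    {u u' v : A} {q : R} (hu₁ : u' * u = 1) (hu₂ : u * u' = 1) (h : u * v = q • (v * u)) :
    v * u' = q • (u' * v) := by
  calc v * u' = u' * (u * v) * u' := by rw [← mul_assoc u', hu₁, one_mul]
    _ = q • (u' * v) := by rw [h, mul_smul_comm, smul_mul_assoc, mul_assoc, mul_assoc, hu₂, mul_one]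

lemma Complex.mul_conj_eq_one_of_norm_eq_one {q : ℂ} (hq : ‖q‖ = 1) : q * conj q = 1 := by
  rw [Complex.mul_conj', hq, Complex.ofReal_one, one_pow]

lemma IsSelfAdjoint.comp_comp_one_sub_eq_zero_iff {𝕜 E : Type*} [RCLike 𝕜] [NormedAddCommGroup E]
    [InnerProductSpace 𝕜 E] [CompleteSpace E] {P : E →L[𝕜] E} (hP : IsSelfAdjoint P)
    (U : E →L[𝕜] E) : P ∘L U ∘L (1 - P) = 0 ↔ (1 - P) ∘L adjoint U ∘L P = 0 := by
  rw [← (adjoint : (E →L[𝕜] E) ≃ₗᵢ⋆[𝕜] _).map_eq_zero_iff,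
    adjoint_comp, adjoint_comp, hP.adjoint_eq, map_sub, adjoint_one, hP.adjoint_eq, comp_assoc]

namespace BCLModelSpace

variable {F Ku : Type*} [NormedAddCommGroup F] [InnerProductSpace ℂ F]
  [NormedAddCommGroup Ku] [InnerProductSpace ℂ Ku]

def coeff (x : BCLModelSpace F Ku) (n : ℕ) : F := ((WithLp.equiv 2 _ x).1 : ∀ _ : ℕ, F) n

def unitaryPart (x : BCLModelSpace F Ku) : Ku := (WithLp.equiv 2 _ x).2

@[ext]
lemma ext {x y : BCLModelSpace F Ku} (h : ∀ n, coeff x n = coeff y n)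
    (h' : unitaryPart x = unitaryPart y) : x = y :=
  (WithLp.equiv 2 _).injective (Prod.ext (lp.ext (funext h)) h')

@[simp] lemma coeff_add (x y : BCLModelSpace F Ku) (n : ℕ) :
    coeff (x + y) n = coeff x n + coeff y n := rfl

@[simp] lemma coeff_smul (a : ℂ) (x : BCLModelSpace F Ku) (n : ℕ) :
    coeff (a • x) n = a • coeff x n := rfl

@[simp] lemma unitaryPart_add (x y : BCLModelSpace F Ku) :
    unitaryPart (x + y) = unitaryPart x + unitaryPart y := rfl

@[simp] lemma unitaryPart_smul (a : ℂ) (x : BCLModelSpace F Ku) :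
    unitaryPart (a • x) = a • unitaryPart x := rfl

noncomputable def single (m : ℕ) (f : F) : BCLModelSpace F Ku :=
  (WithLp.equiv 2 _).symm (lp.single 2 m f, 0)

noncomputable def inr (k : Ku) : BCLModelSpace F Ku :=
  (WithLp.equiv 2 _).symm (0, k)

@[simp] lemma coeff_single (m : ℕ) (f : F) (n : ℕ) :
    coeff (single (Ku := Ku) m f) n = if n = m then f else 0 := by
  simp only [coeff, single, Equiv.apply_symm_apply, lp.coeFn_single, Pi.single_apply]

@[simp] lemma unitaryPart_single (m : ℕ) (f : F) : unitaryPart (single (Ku := Ku) m f) = 0 := rfl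

@[simp] lemma coeff_inr (k : Ku) (n : ℕ) : coeff (inr (F := F) k) n = 0 := rfl

@[simp] lemma unitaryPart_inr (k : Ku) : unitaryPart (inr (F := F) k) = k := rfl

lemma inner_single_left (m : ℕ) (f : F) (y : BCLModelSpace F Ku) :
    ⟪single m f, y⟫ = ⟪f, coeff y m⟫ := by
  rw [WithLp.prod_inner_apply]
  change ⟪lp.single 2 m f, y.ofLp.1⟫ + ⟪(0 : Ku), y.ofLp.2⟫ = _
  rw [lp.inner_single_left, inner_zero_left, add_zero]
  rfl

lemma inner_inr_left (k : Ku) (y : BCLModelSpace F Ku) : ⟪inr k, y⟫ = ⟪k, unitaryPart y⟫ := by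
  rw [WithLp.prod_inner_apply]
  change ⟪(0 : lp (fun _ : ℕ => F) 2), y.ofLp.1⟫ + ⟪k, y.ofLp.2⟫ = _
  rw [inner_zero_left, zero_add]
  rfl

end BCLModelSpace

open BCLModelSpace

section Model

variable {F Ku : Type*} [NormedAddCommGroup F] [InnerProductSpace ℂ F]
  [NormedAddCommGroup Ku] [InnerProductSpace ℂ Ku]

/-- `V = (R_q ⊗ P^⊥U + M_z R_q ⊗ PU) ⊕ W`, in coordinates. -/
structure IsBCLModel₁ (q : ℂ) (P U : F →L[ℂ] F) (W : Ku →L[ℂ] Ku)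
    (V : BCLModelSpace F Ku →L[ℂ] BCLModelSpace F Ku) : Prop where
  unitaryPart_apply : ∀ x, unitaryPart (V x) = W (unitaryPart x)
  coeff_zero_apply : ∀ x, coeff (V x) 0 = (1 - P) (U (coeff x 0))
  coeff_succ_apply : ∀ x n,
    coeff (V x) (n + 1) = q ^ (n + 1) • (1 - P) (U (coeff x (n + 1))) + q ^ n • P (U (coeff x n))

/-- `V = (R_q̄ ⊗ U*P + R_q̄ M_z ⊗ U*P^⊥) ⊕ W`, in coordinates. -/
structure IsBCLModel₂ (q : ℂ) (P U : F →L[ℂ] F) [CompleteSpace F] (W : Ku →L[ℂ] Ku)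
    (V : BCLModelSpace F Ku →L[ℂ] BCLModelSpace F Ku) : Prop where
  unitaryPart_apply : ∀ x, unitaryPart (V x) = W (unitaryPart x)
  coeff_zero_apply : ∀ x, coeff (V x) 0 = adjoint U (P (coeff x 0))
  coeff_succ_apply : ∀ x n, coeff (V x) (n + 1) =
    conj q ^ (n + 1) • (adjoint U (P (coeff x (n + 1))) + adjoint U ((1 - P) (coeff x n)))

namespace IsBCLModel₁

variable {q : ℂ} {P U : F →L[ℂ] F} {W : Ku →L[ℂ] Ku}
  {V : BCLModelSpace F Ku →L[ℂ] BCLModelSpace F Ku}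

lemma apply_single (hV : IsBCLModel₁ q P U W V) (m : ℕ) (f : F) :
    V (single m f) = single m (q ^ m • (1 - P) (U f)) + single (m + 1) (q ^ m • P (U f)) := by
  ext n
  · rcases n with _ | n
    · rcases m with _ | m <;> simp [hV.coeff_zero_apply]
    · rw [hV.coeff_succ_apply]
      by_cases h : n = m
      · subst h; simp
      · rcases eq_or_ne (n + 1) m with rfl | h' <;> simp [*]
  · simp [hV.unitaryPart_apply]

lemma apply_inr (hV : IsBCLModel₁ q P U W V) (k : Ku) : V (inr k) = inr (W k) := by
  ext n
  · rcases n with _ | n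
    · simp [hV.coeff_zero_apply]
    · simp [hV.coeff_succ_apply]
  · simp [hV.unitaryPart_apply]

variable [CompleteSpace F] [CompleteSpace Ku]

lemma coeff_adjoint_apply (hV : IsBCLModel₁ q P U W V) (hP : IsSelfAdjoint P)
    (x : BCLModelSpace F Ku) (m : ℕ) : coeff (adjoint V x) m =
      conj q ^ m • (adjoint U ((1 - P) (coeff x m)) + adjoint U (P (coeff x (m + 1)))) := by
  have sym : ∀ T : F →L[ℂ] F, IsSelfAdjoint T → ∀ a b, ⟪T a, b⟫ = ⟪a, T b⟫ :=
    fun T hT => hT.isSymmetric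
  have hP' : IsSelfAdjoint (1 - P) := (IsSelfAdjoint.one _).sub hP
  refine ext_inner_left ℂ fun f => ?_
  rw [← inner_single_left, adjoint_inner_right, hV.apply_single]
  simp only [inner_add_left, inner_add_right, inner_single_left, inner_smul_left,
    inner_smul_right, adjoint_inner_right, sym P hP, sym (1 - P) hP', map_pow]
  ring

lemma unitaryPart_adjoint_apply (hV : IsBCLModel₁ q P U W V) (x : BCLModelSpace F Ku) :
    unitaryPart (adjoint V x) = adjoint W (unitaryPart x) :=
  ext_inner_left ℂ fun k => by
    rw [← inner_inr_left, adjoint_inner_right, hV.apply_inr, inner_inr_left, adjoint_inner_right]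

end IsBCLModel₁

end Model

section Pair

variable {F Ku : Type*} [NormedAddCommGroup F] [InnerProductSpace ℂ F] [CompleteSpace F]
  [NormedAddCommGroup Ku] [InnerProductSpace ℂ Ku]
  {q : ℂ} {P U : F →L[ℂ] F} {W₁ W₂ : Ku →L[ℂ] Ku}
  {V₁ V₂ : BCLModelSpace F Ku →L[ℂ] BCLModelSpace F Ku}

namespace IsBCLModel₂

lemma coeff_comp_zero (h₂ : IsBCLModel₂ q P U W₂ V₂) (h₁ : IsBCLModel₁ q P U W₁ V₁)
    (hP : IsIdempotentElem P) (x : BCLModelSpace F Ku) : coeff (V₂ (V₁ x)) 0 = 0 := by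
  have hPP : ∀ v, P (P v) = P v := DFunLike.congr_fun hP
  simp [h₁.coeff_zero_apply, h₂.coeff_zero_apply, hPP, sub_apply]

lemma coeff_comp_succ (h₂ : IsBCLModel₂ q P U W₂ V₂) (h₁ : IsBCLModel₁ q P U W₁ V₁)
    (hq : ‖q‖ = 1) (hP : IsIdempotentElem P) (hU : adjoint U ∘L U = 1)
    (x : BCLModelSpace F Ku) (n : ℕ) : coeff (V₂ (V₁ x)) (n + 1) = conj q • coeff x n := by
  have hPP : ∀ v, P (P v) = P v := DFunLike.congr_fun hP
  have hUU : ∀ v, adjoint U (U v) = v := DFunLike.congr_fun hU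
  have hqq : ∀ k : ℕ, conj q ^ (k + 1) * q ^ k = conj q := fun k => by
    rw [pow_succ, mul_right_comm, ← mul_pow, mul_comm (conj q),
      Complex.mul_conj_eq_one_of_norm_eq_one hq, one_pow, one_mul]
  rw [h₂.coeff_succ_apply, h₁.coeff_succ_apply]
  rcases n with _ | n
  · simp [h₁.coeff_zero_apply, hUU, hPP, sub_apply]
  · simp [h₁.coeff_succ_apply, smul_smul, smul_sub, hUU, hPP, sub_apply, hqq]

end IsBCLModel₂

namespace IsBCLModel₁

lemma coeff_comp_zero (h₁ : IsBCLModel₁ q P U W₁ V₁) (h₂ : IsBCLModel₂ q P U W₂ V₂)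
    (hP : IsIdempotentElem P) (hU : U ∘L adjoint U = 1) (x : BCLModelSpace F Ku) :
    coeff (V₁ (V₂ x)) 0 = 0 := by
  have hPP : ∀ v, P (P v) = P v := DFunLike.congr_fun hP
  have hUU : ∀ v, U (adjoint U v) = v := DFunLike.congr_fun hU
  simp [h₁.coeff_zero_apply, h₂.coeff_zero_apply, hUU, hPP]

lemma coeff_comp_succ (h₁ : IsBCLModel₁ q P U W₁ V₁) (h₂ : IsBCLModel₂ q P U W₂ V₂)
    (hq : ‖q‖ = 1) (hP : IsIdempotentElem P) (hU : U ∘L adjoint U = 1)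
    (x : BCLModelSpace F Ku) (n : ℕ) : coeff (V₁ (V₂ x)) (n + 1) = coeff x n := by
  have hPP : ∀ v, P (P v) = P v := DFunLike.congr_fun hP
  have hUU : ∀ v, U (adjoint U v) = v := DFunLike.congr_fun hU
  have hqq := Complex.mul_conj_eq_one_of_norm_eq_one hq
  rw [h₁.coeff_succ_apply, h₂.coeff_succ_apply]
  rcases n with _ | n
  · simp [h₂.coeff_zero_apply, smul_smul, hqq, hUU, hPP, sub_apply]
  · simp [h₂.coeff_succ_apply, smul_smul, ← mul_pow, hqq, hUU, hPP, sub_apply]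

lemma comp_eq_smul_comp (h₁ : IsBCLModel₁ q P U W₁ V₁) (h₂ : IsBCLModel₂ q P U W₂ V₂)
    (hq : ‖q‖ = 1) (hP : IsIdempotentElem P) (hU₁ : adjoint U ∘L U = 1)
    (hU₂ : U ∘L adjoint U = 1) (hW : W₁ ∘L W₂ = q • (W₂ ∘L W₁)) :
    V₁ ∘L V₂ = q • (V₂ ∘L V₁) := by
  ext x n
  · rcases n with _ | n
    · simp [h₁.coeff_comp_zero h₂ hP hU₂, h₂.coeff_comp_zero h₁ hP]
    · simp [h₁.coeff_comp_succ h₂ hq hP hU₂, h₂.coeff_comp_succ h₁ hq hP hU₁, smul_smul,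
        Complex.mul_conj_eq_one_of_norm_eq_one hq]
  · simpa [h₁.unitaryPart_apply, h₂.unitaryPart_apply] using DFunLike.congr_fun hW _

variable [CompleteSpace Ku]

lemma coeff_comp_adjoint_zero (h₁ : IsBCLModel₁ q P U W₁ V₁) (h₂ : IsBCLModel₂ q P U W₂ V₂)
    (hq : ‖q‖ = 1) (hP : IsSelfAdjoint P) (x : BCLModelSpace F Ku) :
    coeff (V₂ (adjoint V₁ x)) 0 = q • coeff (adjoint V₁ (V₂ x)) 0 -
      q • adjoint U ((1 - P) (adjoint U (P (coeff x 0)))) := by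
  simp only [h₁.coeff_adjoint_apply hP, h₂.coeff_zero_apply, h₂.coeff_succ_apply, pow_zero,
    pow_one, one_smul, zero_add, map_add, map_smul, smul_add, smul_smul, one_mul,
    Complex.mul_conj_eq_one_of_norm_eq_one hq]
  abel

lemma coeff_comp_adjoint_succ (h₁ : IsBCLModel₁ q P U W₁ V₁) (h₂ : IsBCLModel₂ q P U W₂ V₂)
    (hq : ‖q‖ = 1) (hP : IsSelfAdjoint P) (x : BCLModelSpace F Ku) (n : ℕ) :
    coeff (V₂ (adjoint V₁ x)) (n + 1) = q • coeff (adjoint V₁ (V₂ x)) (n + 1) := by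
  have hq0 : q ≠ 0 := by rintro rfl; simp at hq
  simp only [h₁.coeff_adjoint_apply hP, h₂.coeff_succ_apply, ← Complex.inv_eq_conj hq, map_add,
    map_smul, smul_add, smul_smul]
  match_scalars <;> simp only [pow_succ] <;> field_simp

lemma unitaryPart_comp_adjoint (h₁ : IsBCLModel₁ q P U W₁ V₁) (h₂ : IsBCLModel₂ q P U W₂ V₂)
    (hW₁₁ : adjoint W₁ ∘L W₁ = 1) (hW₁₂ : W₁ ∘L adjoint W₁ = 1)
    (hW : W₁ ∘L W₂ = q • (W₂ ∘L W₁)) (x : BCLModelSpace F Ku) :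
    unitaryPart (V₂ (adjoint V₁ x)) = q • unitaryPart (adjoint V₁ (V₂ x)) := by
  rw [h₂.unitaryPart_apply, h₁.unitaryPart_adjoint_apply, h₁.unitaryPart_adjoint_apply,
    h₂.unitaryPart_apply]
  exact DFunLike.congr_fun (mul_inverse_eq_smul_inverse_mul hW₁₁ hW₁₂ hW) _

lemma comp_adjoint_eq_smul_comp_iff (h₁ : IsBCLModel₁ q P U W₁ V₁)
    (h₂ : IsBCLModel₂ q P U W₂ V₂) (hq : ‖q‖ = 1) (hP : IsSelfAdjoint P)
    (hU : U ∘L adjoint U = 1) (hW₁₁ : adjoint W₁ ∘L W₁ = 1) (hW₁₂ : W₁ ∘L adjoint W₁ = 1)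
    (hW : W₁ ∘L W₂ = q • (W₂ ∘L W₁)) :
    V₂ ∘L adjoint V₁ = q • (adjoint V₁ ∘L V₂) ↔ (1 - P) ∘L adjoint U ∘L P = 0 := by
  constructor
  · intro h
    have hq0 : q ≠ 0 := by rintro rfl; simp at hq
    ext g
    have h0 := congr_arg (coeff · 0) (DFunLike.congr_fun h (single 0 g))
    simp only [comp_apply, smul_apply, coeff_smul, h₁.coeff_comp_adjoint_zero h₂ hq hP,
      coeff_single, if_pos, sub_eq_self, smul_eq_zero, hq0, false_or] at h0
    have hUU : ∀ v, U (adjoint U v) = v := DFunLike.congr_fun hU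
    simpa only [comp_apply, zero_apply, hUU, map_zero] using congr_arg U h0
  · intro h
    have hPUP : ∀ v, (1 - P) (adjoint U (P v)) = 0 := DFunLike.congr_fun h
    ext x n
    · rcases n with _ | n
      · simp [h₁.coeff_comp_adjoint_zero h₂ hq hP, hPUP]
      · simp [h₁.coeff_comp_adjoint_succ h₂ hq hP]
    · simp [h₁.unitaryPart_comp_adjoint h₂ hW₁₁ hW₁₂ hW]

end IsBCLModel₁

end Pair

theorem stmt_10_general (q : ℂ) (hq : ‖q‖ = 1)
    {F Ku : Type*} [NormedAddCommGroup F] [InnerProductSpace ℂ F] [CompleteSpace F]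
    [NormedAddCommGroup Ku] [InnerProductSpace ℂ Ku] [CompleteSpace Ku]
    (P U : F →L[ℂ] F)
    (hP_idem : P ∘L P = P) (hP_sa : IsSelfAdjoint P)
    (hU₁ : adjoint U ∘L U = 1) (hU₂ : U ∘L adjoint U = 1)
    (W₁ W₂ : Ku →L[ℂ] Ku)
    (hW₁₁ : adjoint W₁ ∘L W₁ = 1) (hW₁₂ : W₁ ∘L adjoint W₁ = 1)
    (hW : W₁ ∘L W₂ = q • (W₂ ∘L W₁))
    (V₁ V₂ : BCLModelSpace F Ku →L[ℂ] BCLModelSpace F Ku)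
    -- V₁ = (R_q ⊗ P^⊥U + M_z R_q ⊗ PU) ⊕ W₁, described coordinatewise:
    (hV₁u : ∀ x, (WithLp.equiv 2 _ (V₁ x)).2 = W₁ ((WithLp.equiv 2 _ x).2))
    (hV₁0 : ∀ x, ((WithLp.equiv 2 _ (V₁ x)).1 : ∀ _ : ℕ, F) 0
      = (1 - P) (U (((WithLp.equiv 2 _ x).1 : ∀ _ : ℕ, F) 0)))
    (hV₁n : ∀ x, ∀ n : ℕ, ((WithLp.equiv 2 _ (V₁ x)).1 : ∀ _ : ℕ, F) (n + 1)
      = q ^ (n + 1) • (1 - P) (U (((WithLp.equiv 2 _ x).1 : ∀ _ : ℕ, F) (n + 1)))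
        + q ^ n • P (U (((WithLp.equiv 2 _ x).1 : ∀ _ : ℕ, F) n)))
    -- V₂ = (R_q̄ ⊗ U*P + R_q̄ M_z ⊗ U*P^⊥) ⊕ W₂, described coordinatewise:
    (hV₂u : ∀ x, (WithLp.equiv 2 _ (V₂ x)).2 = W₂ ((WithLp.equiv 2 _ x).2))
    (hV₂0 : ∀ x, ((WithLp.equiv 2 _ (V₂ x)).1 : ∀ _ : ℕ, F) 0
      = adjoint U (P (((WithLp.equiv 2 _ x).1 : ∀ _ : ℕ, F) 0)))
    (hV₂n : ∀ x, ∀ n : ℕ, ((WithLp.equiv 2 _ (V₂ x)).1 : ∀ _ : ℕ, F) (n + 1)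
      = (starRingEnd ℂ q) ^ (n + 1) •
          (adjoint U (P (((WithLp.equiv 2 _ x).1 : ∀ _ : ℕ, F) (n + 1)))
            + adjoint U ((1 - P) (((WithLp.equiv 2 _ x).1 : ∀ _ : ℕ, F) n)))) :
    -- the model pair is doubly q-commutative iff P U P^⊥ = 0
    (V₁ ∘L V₂ = q • (V₂ ∘L V₁) ∧ V₂ ∘L adjoint V₁ = q • (adjoint V₁ ∘L V₂)) ↔
      P ∘L U ∘L (1 - P) = 0 := by
  have h₁ : IsBCLModel₁ q P U W₁ V₁ := ⟨hV₁u, hV₁0, hV₁n⟩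
  have h₂ : IsBCLModel₂ q P U W₂ V₂ := ⟨hV₂u, hV₂0, hV₂n⟩
  rw [and_iff_right (h₁.comp_eq_smul_comp h₂ hq hP_idem hU₁ hU₂ hW),
    h₁.comp_adjoint_eq_smul_comp_iff h₂ hq hP_sa hU₂ hW₁₁ hW₁₂ hW,
    hP_sa.comp_comp_one_sub_eq_zero_iff]

theorem stmt_10 (q : ℂ) (hq : ‖q‖ = 1)
    {F Ku : Type*} [NormedAddCommGroup F] [InnerProductSpace ℂ F] [CompleteSpace F]
    [NormedAddCommGroup Ku] [InnerProductSpace ℂ Ku] [CompleteSpace Ku]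
    (P U : F →L[ℂ] F)
    (hP_idem : P ∘L P = P) (hP_sa : IsSelfAdjoint P)
    (hU₁ : adjoint U ∘L U = 1) (hU₂ : U ∘L adjoint U = 1)
    (W₁ W₂ : Ku →L[ℂ] Ku)
    (hW₁₁ : adjoint W₁ ∘L W₁ = 1) (hW₁₂ : W₁ ∘L adjoint W₁ = 1)
    (hW₂₁ : adjoint W₂ ∘L W₂ = 1) (hW₂₂ : W₂ ∘L adjoint W₂ = 1)
    (hW : W₁ ∘L W₂ = q • (W₂ ∘L W₁))
    (V₁ V₂ : BCLModelSpace F Ku →L[ℂ] BCLModelSpace F Ku)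
    -- V₁ = (R_q ⊗ P^⊥U + M_z R_q ⊗ PU) ⊕ W₁, described coordinatewise:
    (hV₁u : ∀ x, (WithLp.equiv 2 _ (V₁ x)).2 = W₁ ((WithLp.equiv 2 _ x).2))
    (hV₁0 : ∀ x, ((WithLp.equiv 2 _ (V₁ x)).1 : ∀ _ : ℕ, F) 0
      = (1 - P) (U (((WithLp.equiv 2 _ x).1 : ∀ _ : ℕ, F) 0)))
    (hV₁n : ∀ x, ∀ n : ℕ, ((WithLp.equiv 2 _ (V₁ x)).1 : ∀ _ : ℕ, F) (n + 1)
      = q ^ (n + 1) • (1 - P) (U (((WithLp.equiv 2 _ x).1 : ∀ _ : ℕ, F) (n + 1)))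
        + q ^ n • P (U (((WithLp.equiv 2 _ x).1 : ∀ _ : ℕ, F) n)))
    -- V₂ = (R_q̄ ⊗ U*P + R_q̄ M_z ⊗ U*P^⊥) ⊕ W₂, described coordinatewise:
    (hV₂u : ∀ x, (WithLp.equiv 2 _ (V₂ x)).2 = W₂ ((WithLp.equiv 2 _ x).2))
    (hV₂0 : ∀ x, ((WithLp.equiv 2 _ (V₂ x)).1 : ∀ _ : ℕ, F) 0
      = adjoint U (P (((WithLp.equiv 2 _ x).1 : ∀ _ : ℕ, F) 0)))
    (hV₂n : ∀ x, ∀ n : ℕ, ((WithLp.equiv 2 _ (V₂ x)).1 : ∀ _ : ℕ, F) (n + 1)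
      = (starRingEnd ℂ q) ^ (n + 1) •
          (adjoint U (P (((WithLp.equiv 2 _ x).1 : ∀ _ : ℕ, F) (n + 1)))
            + adjoint U ((1 - P) (((WithLp.equiv 2 _ x).1 : ∀ _ : ℕ, F) n)))) :
    -- the model pair is doubly q-commutative iff P U P^⊥ = 0
    (V₁ ∘L V₂ = q • (V₂ ∘L V₁) ∧ V₂ ∘L adjoint V₁ = q • (adjoint V₁ ∘L V₂)) ↔
      P ∘L U ∘L (1 - P) = 0 :=
  stmt_10_general q hq P U hP_idem hP_sa hU₁ hU₂ W₁ W₂ hW₁₁ hW₁₂ hW V₁ V₂ hV₁u hV₁0 hV₁n hV₂u hV₂0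
    hV₂n
end
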